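/- arXiv:math/9310215 — 3 statements merged into one kernel-verified Lean document; each statement's English description precedes it below -/
import Mathlib

section
/- Let X be a real normed space and P : X → X a bounded linear projection (P ∘ P = P). Then ‖I − P‖ ≤ 1 if and only if for every x ∈ X and every norming functional x* for x (i.e. ‖x*‖ = 1 and x*(x) = ‖x‖), one has x*(P x) ≥ 0. -/
/-!
If `‖I - P‖ ≤ 1` and `x*` norms `x`, then `x*(x) - x*(Px) = x*((I - P)x) ≤ ‖x‖ = x*(x)`.
Conversely, for `0 ≤ t < 1` let `x*` norm `y = x - tPx`. Since `Py = (1 - t)Px`, the hypothesis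
gives `x*(Px) ≥ 0`, hence `‖y‖ = x*(x) - t x*(Px) ≤ ‖x‖`; letting `t → 1` gives `‖(I - P)x‖ ≤ ‖x‖`.
-/

section

open Filter Set Topology

variable {X : Type*} [NormedAddCommGroup X] [NormedSpace ℝ X]

lemma ContinuousLinearMap.apply_le_norm_of_opNorm_le_one {f : X →L[ℝ] ℝ} (hf : ‖f‖ ≤ 1) (v : X) :
    f v ≤ ‖v‖ := by
  simpa using (le_abs_self (f v)).trans (f.le_of_opNorm_le hf v)

lemma norm_sub_le_of_forall_norm_sub_smul_le {x y : X}
    (h : ∀ t ∈ Ioo (0 : ℝ) 1, ‖x - t • y‖ ≤ ‖x‖) : ‖x - y‖ ≤ ‖x‖ := by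
  have hlim : Tendsto (fun t : ℝ => ‖x - t • y‖) (𝓝[<] 1) (𝓝 ‖x - (1 : ℝ) • y‖) :=
    (Continuous.tendsto (by fun_prop) 1).mono_left nhdsWithin_le_nhds
  simpa using le_of_tendsto hlim (eventually_of_mem (Ioo_mem_nhdsLT zero_lt_one) h)

lemma norm_sub_smul_le_of_forall_norming_nonneg {P : X →L[ℝ] X} (hP : P.comp P = P)
    (H : ∀ (x : X) (f : X →L[ℝ] ℝ), ‖f‖ = 1 → f x = ‖x‖ → 0 ≤ f (P x))
    (x : X) {t : ℝ} (ht₀ : 0 ≤ t) (ht₁ : t < 1) : ‖x - t • P x‖ ≤ ‖x‖ := by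
  set y := x - t • P x
  obtain hy | hy := eq_or_ne y 0
  · simp [hy]
  obtain ⟨f, hf, hfy⟩ := exists_dual_vector ℝ y (norm_ne_zero_iff.mpr hy)
  replace hfy : f y = ‖y‖ := by simpa using hfy
  have hPy : P y = (1 - t) • P x := by
    rw [map_sub, map_smul, ← P.comp_apply, hP, sub_smul, one_smul]
  have hfPx : 0 ≤ f (P x) := by
    have := H y f hf hfy
    rw [hPy, map_smul, smul_eq_mul] at this
    exact nonneg_of_mul_nonneg_right this (by linarith)
  calc ‖y‖ = f y := hfy.symm
    _ = f x - t * f (P x) := by simp [y]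
    _ ≤ f x := sub_le_self _ (mul_nonneg ht₀ hfPx)
    _ ≤ ‖x‖ := f.apply_le_norm_of_opNorm_le_one hf.le x

end

/-- A bounded linear projection `P` on a real normed space satisfies `‖I - P‖ ≤ 1`
iff `x*(Px) ≥ 0` for every `x` and every norming functional `x*` for `x`. -/
theorem stmt_0 (X : Type*) [NormedAddCommGroup X] [NormedSpace ℝ X]
    (P : X →L[ℝ] X) (hP : P.comp P = P) :
    ‖(1 : X →L[ℝ] X) - P‖ ≤ 1 ↔
      ∀ (x : X) (f : X →L[ℝ] ℝ), ‖f‖ = 1 → f x = ‖x‖ → 0 ≤ f (P x) := by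
  constructor
  · intro h x f hf hfx
    have hx : ‖x - P x‖ ≤ ‖x‖ := by simpa using ((1 : X →L[ℝ] X) - P).le_of_opNorm_le h x
    have := (f.apply_le_norm_of_opNorm_le_one hf.le (x - P x)).trans hx
    rw [map_sub, hfx] at this
    linarith
  · intro H
    refine ContinuousLinearMap.opNorm_le_bound _ zero_le_one fun x => ?_
    simpa using norm_sub_le_of_forall_norm_sub_smul_le fun t ht =>
      norm_sub_smul_le_of_forall_norming_nonneg hP H x ht.1.le ht.2
end

section
/- Let μ be Lebesgue measure on [0,1] and let u : [0,1] → ℝ be measurable. If the set of functions {u ∘ σ : σ : [0,1] → [0,1] measure preserving} spans a finite-dimensional subspace of L⁰(μ) (measurable functions modulo a.e. equality), then u is constant a.e. -/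
/-!
Suppose `u` is not a.e. constant, so that some measurable `U` splits `[0,1]` into `A = u⁻¹' U`
and `Aᶜ`, both of positive measure. Splitting a uniform variable on `[0,1]` into two independent
uniform variables `Y` and `Z`, and pushing `Z` forward to the normalized restrictions of Lebesgue
measure to `A` and to `Aᶜ`, we get variables `Z₁ ∈ A` and `Z₂ ∉ A` such that
`σ_P = if Y ∈ P then Z₁ else Z₂` is measure preserving whenever `|P| = |A|`. Sliding the window
`P_k = (kε, kε + |A|]` one step at a time, `u ∘ σ_{P_{k+1}} - u ∘ σ_{P_k}` is nonzero on the event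
`Y ∈ (kε, (k+1)ε]`, where all the other differences vanish. So for every `N` these `N` differences
are linearly independent in `L⁰`.
-/

open MeasureTheory ProbabilityTheory Set

namespace MeasureTheory

variable {α β γ : Type*} [MeasurableSpace α] [MeasurableSpace β] [MeasurableSpace γ]

lemma AEEqFun.coeFn_sum {δ : Type*} [TopologicalSpace δ] [AddCommMonoid δ] [ContinuousAdd δ]
    {μ : Measure α} {ι : Type*} (s : Finset ι) (f : ι → α →ₘ[μ] δ) :
    ⇑(∑ i ∈ s, f i) =ᵐ[μ] ∑ i ∈ s, ⇑(f i) := by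
  classical
  induction s using Finset.induction_on with
  | empty => simpa using AEEqFun.coeFn_zero
  | insert a s ha ih =>
    rw [Finset.sum_insert ha, Finset.sum_insert ha]
    exact (AEEqFun.coeFn_add _ _).trans (Filter.EventuallyEq.rfl.add ih)

lemma AEEqFun.linearIndependent_of_ae_restrict {𝕜 : Type*} [Field 𝕜] [TopologicalSpace 𝕜]
    [IsTopologicalRing 𝕜] {μ : Measure α} {ι : Type*} [Fintype ι] (f : ι → α →ₘ[μ] 𝕜)
    (E : ι → Set α) (hE : ∀ i, μ (E i) ≠ 0) (hne : ∀ i, ∀ᵐ x ∂μ.restrict (E i), f i x ≠ 0)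
    (hzero : ∀ i j, j ≠ i → ∀ᵐ x ∂μ.restrict (E i), f j x = 0) :
    LinearIndependent 𝕜 f := by
  classical
  rw [Fintype.linearIndependent_iff]
  intro c hc i
  have hsum : ⇑(∑ j, c j • f j) =ᵐ[μ] fun x => ∑ j, c j * f j x := by
    filter_upwards [AEEqFun.coeFn_sum Finset.univ fun j => c j • f j,
      ae_all_iff.2 fun j => AEEqFun.coeFn_smul (c j) (f j)] with x hx hsmul
    simp [hx, hsmul]
  have hothers : ∀ᵐ x ∂μ.restrict (E i), ∀ j ∈ {j | j ≠ i}, f j x = 0 :=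
    (ae_ball_iff (Set.to_countable _)).2 (hzero i)
  have := ae_restrict_neBot.2 (hE i)
  obtain ⟨x, hfi, hfj, hsx⟩ := ((hne i).and (hothers.and (ae_restrict_of_ae
    (hsum.symm.trans (hc ▸ AEEqFun.coeFn_zero))))).exists
  replace hsx : ∑ j, c j * f j x = 0 := hsx
  rw [Finset.sum_eq_single i (fun j _ hj => by rw [hfj j hj, mul_zero]) (by simp)] at hsx
  exact (mul_eq_zero.1 hsx).resolve_right hfi

lemma measurePreserving_prod_ite {μ : Measure α} {ν : Measure β} {ρ : Measure γ}
    [IsProbabilityMeasure μ] [SFinite ν] [IsProbabilityMeasure ρ] {P : Set α}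
    [DecidablePred (· ∈ P)] {D : Set γ} (hP : MeasurableSet P) (hD : MeasurableSet D)
    (hPD : μ P = ρ D) {g₁ g₂ : β → γ} (hg₁ : MeasurePreserving g₁ ν ρ[|D])
    (hg₂ : MeasurePreserving g₂ ν ρ[|Dᶜ]) :
    MeasurePreserving (fun p : α × β => if p.1 ∈ P then g₁ p.2 else g₂ p.2) (μ.prod ν) ρ := by
  have hm : Measurable fun p : α × β => if p.1 ∈ P then g₁ p.2 else g₂ p.2 :=
    (hg₁.measurable.comp measurable_snd).ite (measurable_fst hP)
      (hg₂.measurable.comp measurable_snd)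
  refine ⟨hm, Measure.ext fun t ht => ?_⟩
  have hpre : (fun p : α × β => if p.1 ∈ P then g₁ p.2 else g₂ p.2) ⁻¹' t
      = P ×ˢ (g₁ ⁻¹' t) ∪ Pᶜ ×ˢ (g₂ ⁻¹' t) := by
    ext ⟨y, z⟩; by_cases hy : y ∈ P <;> simp [hy]
  have hdisj : Disjoint (P ×ˢ (g₁ ⁻¹' t)) (Pᶜ ×ˢ (g₂ ⁻¹' t)) :=
    disjoint_compl_right.set_prod_left _ _
  rw [Measure.map_apply hm ht, hpre, measure_union hdisj (hP.compl.prod (hg₂.measurable ht)),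
    Measure.prod_prod, Measure.prod_prod, hg₁.measure_preimage ht.nullMeasurableSet,
    hg₂.measure_preimage ht.nullMeasurableSet, prob_compl_eq_one_sub hP, hPD,
    ← prob_compl_eq_one_sub hD, mul_comm, mul_comm (ρ Dᶜ)]
  exact cond_add_cond_compl_eq hD ρ

lemma exists_measure_preimage_ne_zero_of_not_ae_const [Nonempty β]
    [MeasurableSpace.CountablySeparated β] {μ : Measure α} {f : α → β}
    (h : ¬∃ c, f =ᵐ[μ] fun _ => c) :
    ∃ U, MeasurableSet U ∧ μ (f ⁻¹' U) ≠ 0 ∧ μ (f ⁻¹' U)ᶜ ≠ 0 := by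
  by_contra! h'
  refine h (Filter.exists_eventuallyEq_const_of_forall_separating MeasurableSet fun U hU => ?_)
  rcases eq_or_ne (μ (f ⁻¹' U)) 0 with h₀ | h₀
  · exact Or.inr (measure_eq_zero_iff_ae_notMem.1 h₀)
  · exact Or.inl ((measure_eq_zero_iff_ae_notMem.1 (h' U hU h₀)).mono fun _ => not_not.1)

end MeasureTheory

def rearrangements {α δ : Type*} [MeasurableSpace α] [TopologicalSpace δ] (μ : Measure α)
    (u : α → δ) : Set (α →ₘ[μ] δ) :=
  {v | ∃ σ : α → α, MeasurePreserving σ μ μ ∧ ⇑v =ᵐ[μ] u ∘ σ}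

lemma mk_comp_mem_rearrangements {α δ : Type*} [MeasurableSpace α] [TopologicalSpace δ]
    {μ : Measure α} {u : α → δ} (hu : AEStronglyMeasurable u μ) {σ : α → α}
    (hσ : MeasurePreserving σ μ μ) :
    AEEqFun.mk (u ∘ σ) (hu.comp_measurePreserving hσ) ∈ rearrangements μ u :=
  ⟨σ, hσ, AEEqFun.coeFn_mk _ _⟩

lemma mem_Ioc_mul_add_iff {ε a y : ℝ} {N i j : ℕ} (hε : 0 ≤ ε) (hNε : N * ε ≤ a) (hi : i < N)
    (hy : y ∈ Ioc (i * ε) ((i + 1) * ε)) : y ∈ Ioc (j * ε) (j * ε + a) ↔ j ≤ i := by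
  obtain ⟨hy₁, hy₂⟩ := hy
  have hiN : (i : ℝ) + 1 ≤ N := by exact_mod_cast hi
  constructor
  · rintro ⟨hjy, -⟩
    by_contra! hij
    have : (i : ℝ) + 1 ≤ j := by exact_mod_cast hij
    nlinarith
  · intro hji
    have : (j : ℝ) ≤ i := by exact_mod_cast hji
    constructor <;> nlinarith

namespace unitInterval

lemma volume_coe_preimage_Ioc {p q : ℝ} (hp : 0 ≤ p) (hq : q ≤ 1) :
    volume ((↑) ⁻¹' Ioc p q : Set I) = ENNReal.ofReal (q - p) := by
  rw [volume_preimage_coe nullMeasurableSet_Icc measurableSet_Ioc,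
    inter_eq_left.2 (Ioc_subset_Icc_self.trans (Icc_subset_Icc hp hq)), Real.volume_Ioc]

variable {Ω : Type*} [MeasurableSpace Ω] [StandardBorelSpace Ω] {ρ : Measure Ω}
  [IsProbabilityMeasure ρ] {A : Set Ω}

open Classical in
lemma exists_measurePreserving_ite (hA : MeasurableSet A) (h₀ : ρ A ≠ 0) (h₁ : ρ Aᶜ ≠ 0) :
    ∃ (Y : I → I) (Z₁ Z₂ : I → Ω), MeasurePreserving Y volume volume ∧
      (∀ᵐ x, Z₁ x ∈ A) ∧ (∀ᵐ x, Z₂ x ∉ A) ∧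
      ∀ P, MeasurableSet P → volume P = ρ A →
        MeasurePreserving (fun x => if Y x ∈ P then Z₁ x else Z₂ x) volume ρ := by
  have := nonempty_of_isProbabilityMeasure ρ
  have := cond_isProbabilityMeasure h₀
  have := cond_isProbabilityMeasure h₁
  obtain ⟨g₁, hg₁m, hg₁⟩ := ρ[|A].exists_measurable_map_eq
  obtain ⟨g₂, hg₂m, hg₂⟩ := ρ[|Aᶜ].exists_measurable_map_eq
  obtain ⟨F, hFm, hF⟩ := (volume : Measure (I × I)).exists_measurable_map_eq
  have hF : MeasurePreserving F volume (volume.prod volume) := ⟨hFm, hF⟩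
  have hg₁ : MeasurePreserving g₁ volume ρ[|A] := ⟨hg₁m, hg₁⟩
  have hg₂ : MeasurePreserving g₂ volume ρ[|Aᶜ] := ⟨hg₂m, hg₂⟩
  refine ⟨fun x => (F x).1, fun x => g₁ (F x).2, fun x => g₂ (F x).2,
    measurePreserving_fst.comp hF, ?_, ?_, fun P hP hPA => ?_⟩
  · exact ((hg₁.comp measurePreserving_snd).comp hF).quasiMeasurePreserving.ae (ae_cond_mem hA)
  · exact ((hg₂.comp measurePreserving_snd).comp hF).quasiMeasurePreserving.ae
      (ae_cond_mem hA.compl)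
  · exact (measurePreserving_prod_ite hP hA hPA hg₁ hg₂).comp hF

lemma exists_measurePreserving_pairs_separating (hA : MeasurableSet A) (h₀ : ρ A ≠ 0)
    (h₁ : ρ Aᶜ ≠ 0) (N : ℕ) :
    ∃ (τ τ' : Fin N → I → Ω) (E : Fin N → Set I),
      (∀ i, MeasurePreserving (τ i) volume ρ) ∧ (∀ i, MeasurePreserving (τ' i) volume ρ) ∧
      (∀ i, volume (E i) ≠ 0) ∧
      (∀ i, ∀ᵐ x ∂volume.restrict (E i), τ i x ∈ A ∧ τ' i x ∉ A) ∧
      ∀ i j, j ≠ i → ∀ᵐ x ∂volume.restrict (E i), τ' j x = τ j x := by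
  classical
  obtain ⟨Y, Z₁, Z₂, hY, hZ₁, hZ₂, hswitch⟩ := exists_measurePreserving_ite hA h₀ h₁
  set a := ρ.real A
  have ha₀ : 0 < a := ENNReal.toReal_pos h₀ (measure_ne_top _ _)
  have ha₁ : a < 1 := by
    have : 0 < ρ.real Aᶜ := ENNReal.toReal_pos h₁ (measure_ne_top _ _)
    linarith [probReal_compl_eq_one_sub (μ := ρ) hA]
  obtain ⟨ε, hε, hNε⟩ := exists_pos_mul_lt (lt_min ha₀ (sub_pos.2 ha₁)) (N : ℝ)
  let slot : ℕ → Set I := fun i => (↑) ⁻¹' Ioc (i * ε) ((i + 1) * ε)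
  let window : ℕ → Set I := fun k => (↑) ⁻¹' Ioc (k * ε) (k * ε + a)
  have hkε : ∀ k ≤ N, (k : ℝ) * ε + a ≤ 1 := fun k hk => by
    have : (k : ℝ) ≤ N := by exact_mod_cast hk
    nlinarith [min_le_right a (1 - a)]
  have hwindow_measure : ∀ k ≤ N, volume (window k) = ρ A := fun k hk => by
    rw [volume_coe_preimage_Ioc (by positivity) (hkε k hk), add_sub_cancel_left, ofReal_measureReal]
  have hwindow : ∀ i < N, ∀ x ∈ Y ⁻¹' slot i, ∀ k, Y x ∈ window k ↔ k ≤ i :=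
    fun i hi x hx k => mem_Ioc_mul_add_iff hε.le (hNε.le.trans (min_le_left _ _)) hi hx
  have hIoc : ∀ p q : ℝ, MeasurableSet ((↑) ⁻¹' Ioc p q : Set I) :=
    fun _ _ => measurable_subtype_coe measurableSet_Ioc
  have hslot : ∀ i, MeasurableSet (Y ⁻¹' slot i) := fun i => hY.measurable (hIoc _ _)
  refine ⟨fun i x => if Y x ∈ window i then Z₁ x else Z₂ x,
    fun i x => if Y x ∈ window (i + 1) then Z₁ x else Z₂ x, fun i => Y ⁻¹' slot i,
    fun i => ?_, fun i => ?_, fun i => ?_, fun i => ?_, fun i j hji => ?_⟩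
  · exact hswitch _ (hIoc _ _) (hwindow_measure i i.2.le)
  · exact hswitch _ (hIoc _ _) (hwindow_measure (i + 1) i.2)
  · have := hkε (i + 1) i.2
    push_cast at this
    rw [hY.measure_preimage (hIoc _ _).nullMeasurableSet,
      volume_coe_preimage_Ioc (by positivity) (by linarith)]
    simpa [add_mul] using hε
  · filter_upwards [ae_restrict_of_ae hZ₁, ae_restrict_of_ae hZ₂, ae_restrict_mem (hslot i)]
      with x h₁ h₂ hx
    simp only [if_pos ((hwindow i i.2 x hx i).2 le_rfl),
      if_neg ((hwindow i i.2 x hx (i + 1)).not.2 (by omega))]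
    exact ⟨h₁, h₂⟩
  · filter_upwards [ae_restrict_mem (hslot i)] with x hx
    refine if_congr ?_ rfl rfl
    rw [hwindow i i.2 x hx, hwindow i i.2 x hx]
    omega

lemma exists_linearIndependent_rearrangements {u : I → ℝ} (hu : Measurable u) {U : Set ℝ}
    (hU : MeasurableSet U) (h₀ : volume (u ⁻¹' U) ≠ 0) (h₁ : volume (u ⁻¹' U)ᶜ ≠ 0) (N : ℕ) :
    ∃ f : Fin N → Submodule.span ℝ (rearrangements volume u), LinearIndependent ℝ f := by
  obtain ⟨τ, τ', E, hτ, hτ', hE, hsep, heq⟩ :=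
    exists_measurePreserving_pairs_separating (hu hU) h₀ h₁ N
  have hum : AEStronglyMeasurable u volume := hu.aestronglyMeasurable
  let f : Fin N → Submodule.span ℝ (rearrangements volume u) := fun i =>
    ⟨_, sub_mem (Submodule.subset_span (mk_comp_mem_rearrangements hum (hτ' i)))
      (Submodule.subset_span (mk_comp_mem_rearrangements hum (hτ i)))⟩
  have hf : ∀ i, ⇑(f i : I →ₘ[volume] ℝ) =ᵐ[volume] fun x => u (τ' i x) - u (τ i x) :=
    fun i => (AEEqFun.coeFn_sub _ _).trans ((AEEqFun.coeFn_mk _ _).sub (AEEqFun.coeFn_mk _ _))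
  refine ⟨f, LinearIndependent.of_comp (Submodule.subtype _)
    (AEEqFun.linearIndependent_of_ae_restrict _ E hE (fun i => ?_) (fun i j hji => ?_))⟩
  · filter_upwards [ae_restrict_of_ae (hf i), hsep i] with x hx ⟨h₁, h₂⟩
    simp only [Function.comp_apply, Submodule.coe_subtype, hx]
    exact sub_ne_zero.2 fun h => h₂ (show u (τ' i x) ∈ U from h ▸ h₁)
  · filter_upwards [ae_restrict_of_ae (hf j), heq i j hji] with x hx hxE
    simp [hx, hxE]

end unitInterval

/-- If the rearrangements `u ∘ σ` of a measurable `u : [0,1] → ℝ`, over all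
measure-preserving `σ : [0,1] → [0,1]`, span a finite-dimensional subspace of
`L⁰` (measurable functions mod a.e. equality), then `u` is constant a.e. -/
theorem stmt_7 (u : Set.Icc (0 : ℝ) 1 → ℝ) (hu : Measurable u)
    (hfin : FiniteDimensional ℝ (Submodule.span ℝ
      {v : Set.Icc (0 : ℝ) 1 →ₘ[volume] ℝ |
        ∃ σ : Set.Icc (0 : ℝ) 1 → Set.Icc (0 : ℝ) 1,
          MeasurePreserving σ volume volume ∧ ⇑v =ᵐ[volume] u ∘ σ})) :
    ∃ c : ℝ, u =ᵐ[volume] fun _ => c := by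
  by_contra hconst
  obtain ⟨U, hU, h₀, h₁⟩ := exists_measure_preimage_ne_zero_of_not_ae_const hconst
  have : FiniteDimensional ℝ (Submodule.span ℝ (rearrangements volume u)) := hfin
  obtain ⟨f, hf⟩ := unitInterval.exists_linearIndependent_rearrangements hu hU h₀ h₁
    (Module.finrank ℝ (Submodule.span ℝ (rearrangements volume u)) + 1)
  simpa using hf.fintype_card_le_finrank
end

section
/- Let μ be a nonatomic finite measure, X an order-continuous Köthe function space on (Ω, μ), and suppose P : X → X is a projection of norm 1 onto a subspace of finite codimension n, with Q = I − P = ∑_{j=1}^n f_j ⊗ u_j (f_j ∈ X* linearly independent, u_j ∈ X linearly independent). Then for every x ∈ X, every norming x* ∈ X* for x (identified with a measurable function), and every measurable h with |h| = 1 a.e.: ∑_{j=1}^n (∫ f_j h x dμ)(∫ u_j h x* dμ) ≥ 0. -/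
open MeasureTheory

/-- An (order-continuous) Köthe function space on `(Ω, μ)`: a normed ideal lattice of
measurable functions, modeled by a membership predicate and a norm. -/
structure KotheSpace {Ω : Type*} [MeasurableSpace Ω] (μ : Measure Ω) where
  Mem : (Ω → ℝ) → Prop
  norm : (Ω → ℝ) → ℝ
  measurable_of_mem : ∀ f, Mem f → Measurable f
  zero_mem : Mem 0
  add_mem : ∀ f g, Mem f → Mem g → Mem (f + g)
  smul_mem : ∀ (c : ℝ) f, Mem f → Mem (c • f)
  norm_nonneg : ∀ f, Mem f → 0 ≤ norm f
  norm_eq_zero_iff : ∀ f, Mem f → (norm f = 0 ↔ f =ᵐ[μ] 0)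
  norm_add_le : ∀ f g, Mem f → Mem g → norm (f + g) ≤ norm f + norm g
  norm_smul : ∀ (c : ℝ) f, Mem f → norm (c • f) = |c| * norm f
  ideal_mem : ∀ f g, Measurable f → Mem g → (∀ᵐ ω ∂μ, |f ω| ≤ |g ω|) → Mem f
  ideal_norm_le : ∀ f g, Mem f → Mem g → (∀ᵐ ω ∂μ, |f ω| ≤ |g ω|) → norm f ≤ norm g
  order_continuous : ∀ f : ℕ → Ω → ℝ, (∀ k, Mem (f k)) →
    (∀ᵐ ω ∂μ, ∀ k, 0 ≤ f (k + 1) ω ∧ f (k + 1) ω ≤ f k ω) →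
    (∀ᵐ ω ∂μ, Filter.Tendsto (fun k => f k ω) Filter.atTop (nhds 0)) →
    Filter.Tendsto (fun k => norm (f k)) Filter.atTop (nhds 0)

/-- `xs` (a measurable function, identified with a functional via integral duality)
is a norming functional for `x ∈ X`: it has dual norm at most one and attains `‖x‖`
at `x`. -/
def IsNormingFunctional {Ω : Type*} [MeasurableSpace Ω] {μ : Measure Ω}
    (X : KotheSpace μ) (x xs : Ω → ℝ) : Prop :=
  Measurable xs ∧
    (∀ y, X.Mem y → Integrable (fun ω => y ω * xs ω) μ ∧
      (∫ ω, y ω * xs ω ∂μ) ≤ X.norm y) ∧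
    (∫ ω, x ω * xs ω ∂μ) = X.norm x

/-! Multiplying by a unimodular `h` is an isometry of the lattice norm and squares to the
identity, so `(h x, h x*)` is again a norming pair. For a norming pair `(y, y*)` and
`‖P y‖ ≤ ‖y‖` one has `∫ (y - P y) y* ≥ ‖y‖ - ‖P y‖ ≥ 0`, and applied to `y = h x` the
left side is exactly the sum in question, by the rank-`n` form of `Q = I - P`. -/

section

variable {Ω : Type*} [MeasurableSpace Ω] {μ : Measure Ω}

theorem integral_sum_mul_eq_sum_mul_integral {ι : Type*} (s : Finset ι) (c : ι → ℝ)
    (u : ι → Ω → ℝ) (g : Ω → ℝ) (hint : ∀ j ∈ s, Integrable (fun ω => u j ω * g ω) μ) :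
    ∫ ω, (∑ j ∈ s, c j * u j ω) * g ω ∂μ = ∑ j ∈ s, c j * ∫ ω, u j ω * g ω ∂μ := by
  simp_rw [Finset.sum_mul, mul_assoc, ← integral_const_mul]
  exact integral_finsetSum s fun j hj => (hint j hj).const_mul (c j)

namespace KotheSpace

variable (X : KotheSpace μ) {h : Ω → ℝ}

theorem mem_mul_of_abs_eq_one (hh_meas : Measurable h) (hh : ∀ᵐ ω ∂μ, |h ω| = 1)
    {z : Ω → ℝ} (hz : X.Mem z) : X.Mem fun ω => h ω * z ω :=
  X.ideal_mem _ z (hh_meas.mul (X.measurable_of_mem z hz)) hz <| by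
    filter_upwards [hh] with ω hω
    rw [abs_mul, hω, one_mul]

theorem norm_mul_of_abs_eq_one (hh_meas : Measurable h) (hh : ∀ᵐ ω ∂μ, |h ω| = 1)
    {z : Ω → ℝ} (hz : X.Mem z) : X.norm (fun ω => h ω * z ω) = X.norm z := by
  have hhz := X.mem_mul_of_abs_eq_one hh_meas hh hz
  have habs : ∀ᵐ ω ∂μ, |h ω * z ω| = |z ω| := by
    filter_upwards [hh] with ω hω
    rw [abs_mul, hω, one_mul]
  exact le_antisymm (X.ideal_norm_le _ z hhz hz (habs.mono fun _ e => e.le))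
    (X.ideal_norm_le z _ hz hhz (habs.mono fun _ e => e.ge))

end KotheSpace

namespace IsNormingFunctional

variable {X : KotheSpace μ} {x xs : Ω → ℝ}

theorem mul_abs_eq_one (hxs : IsNormingFunctional X x xs) (hx : X.Mem x) {h : Ω → ℝ}
    (hh_meas : Measurable h) (hh : ∀ᵐ ω ∂μ, |h ω| = 1) :
    IsNormingFunctional X (fun ω => h ω * x ω) (fun ω => h ω * xs ω) := by
  obtain ⟨hxs_meas, hxs_dual, hxs_att⟩ := hxs
  have hswap : ∀ y : Ω → ℝ,
      (fun ω => y ω * (h ω * xs ω)) = fun ω => (h ω * y ω) * xs ω := by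
    intro y; funext ω; ring
  refine ⟨hh_meas.mul hxs_meas, fun y hy => ?_, ?_⟩
  · obtain ⟨hint, hle⟩ := hxs_dual _ (X.mem_mul_of_abs_eq_one hh_meas hh hy)
    rw [hswap, ← X.norm_mul_of_abs_eq_one hh_meas hh hy]
    exact ⟨hint, hle⟩
  · have hsq : (fun ω => (h ω * x ω) * (h ω * xs ω)) =ᵐ[μ] fun ω => x ω * xs ω := by
      filter_upwards [hh] with ω hω
      have h2 : h ω * h ω = 1 := by rw [← abs_mul_abs_self, hω, one_mul]
      linear_combination (x ω * xs ω) * h2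
    rw [integral_congr_ae hsq, hxs_att, X.norm_mul_of_abs_eq_one hh_meas hh hx]

theorem integral_sub_mul_nonneg (hxs : IsNormingFunctional X x xs) (hx : X.Mem x)
    {z : Ω → ℝ} (hz : X.Mem z) (hzx : X.norm z ≤ X.norm x) :
    0 ≤ ∫ ω, (x ω - z ω) * xs ω ∂μ := by
  obtain ⟨-, hxs_dual, hxs_att⟩ := hxs
  simp_rw [sub_mul]
  rw [integral_sub (hxs_dual x hx).1 (hxs_dual z hz).1, hxs_att]
  linarith [(hxs_dual z hz).2]

end IsNormingFunctional

end

theorem stmt_14_general {Ω : Type*} [MeasurableSpace Ω] (μ : Measure Ω)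
    (X : KotheSpace μ) (n : ℕ)
    (P : (Ω → ℝ) → (Ω → ℝ))
    (hPmem : ∀ x, X.Mem x → X.Mem (P x))
    (hPnorm : ∀ x, X.Mem x → X.norm (P x) ≤ X.norm x)  -- `‖P‖ = 1`
    (f u : Fin n → Ω → ℝ)
    (hu_mem : ∀ j, X.Mem (u j))
    (hQ : ∀ x, X.Mem x → ∀ ω,
      x ω - P x ω = ∑ j : Fin n, (∫ ω', f j ω' * x ω' ∂μ) * u j ω)
    (x xs : Ω → ℝ) (hx : X.Mem x) (hxs : IsNormingFunctional X x xs)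
    (h : Ω → ℝ) (hh_meas : Measurable h) (hh : ∀ᵐ ω ∂μ, |h ω| = 1) :
    0 ≤ ∑ j : Fin n,
        (∫ ω, f j ω * (h ω * x ω) ∂μ) * (∫ ω, u j ω * (h ω * xs ω) ∂μ) := by
  set y : Ω → ℝ := fun ω => h ω * x ω
  have hy : X.Mem y := X.mem_mul_of_abs_eq_one hh_meas hh hx
  have hys := hxs.mul_abs_eq_one hx hh_meas hh
  have hsum := integral_sum_mul_eq_sum_mul_integral (μ := μ) Finset.univ
    (fun j => ∫ ω, f j ω * y ω ∂μ) u (fun ω => h ω * xs ω)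
    fun j _ => (hys.2.1 (u j) (hu_mem j)).1
  simp_rw [← hQ y hy] at hsum
  rw [← hsum]
  exact hys.integral_sub_mul_nonneg hy (hPmem y hy) (hPnorm y hy)

/-- Let `X` be an order-continuous Köthe function space over a nonatomic finite
measure, and `P` a norm-one projection of `X` onto a subspace of codimension `n`,
with complementary projection `Q = I - P = ∑_{j=1}^n f_j ⊗ u_j` (the `f_j ∈ X*`
linearly independent, the `u_j ∈ X` linearly independent). Then for every `x ∈ X`,
every norming functional `x*` for `x`, and every measurable `h` with `|h| = 1` a.e.,
`∑_j (∫ f_j h x dμ)(∫ u_j h x* dμ) ≥ 0`. -/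
theorem stmt_14 {Ω : Type*} [MeasurableSpace Ω] (μ : Measure Ω)
    [IsFiniteMeasure μ] [NullSingletonClass μ] (X : KotheSpace μ) (n : ℕ)
    (P : (Ω → ℝ) → (Ω → ℝ)) (hPlin : IsLinearMap ℝ P)
    (hPmem : ∀ x, X.Mem x → X.Mem (P x))
    (hPproj : ∀ x, X.Mem x → P (P x) = P x)
    (hPnorm : ∀ x, X.Mem x → X.norm (P x) ≤ X.norm x)  -- `‖P‖ = 1`
    (f u : Fin n → Ω → ℝ)
    (hf_meas : ∀ j, Measurable (f j))
    (hf_int : ∀ j x, X.Mem x → Integrable (fun ω => f j ω * x ω) μ)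
    (hu_mem : ∀ j, X.Mem (u j))
    (hf_ind : LinearIndependent ℝ f) (hu_ind : LinearIndependent ℝ u)
    (hQ : ∀ x, X.Mem x → ∀ ω,
      x ω - P x ω = ∑ j : Fin n, (∫ ω', f j ω' * x ω' ∂μ) * u j ω)
    (x xs : Ω → ℝ) (hx : X.Mem x) (hxs : IsNormingFunctional X x xs)
    (h : Ω → ℝ) (hh_meas : Measurable h) (hh : ∀ᵐ ω ∂μ, |h ω| = 1) :
    0 ≤ ∑ j : Fin n,
        (∫ ω, f j ω * (h ω * x ω) ∂μ) * (∫ ω, u j ω * (h ω * xs ω) ∂μ) :=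
  stmt_14_general μ X n P hPmem hPnorm f u hu_mem hQ x xs hx hxs h hh_meas hh
end
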